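/- arXiv:0704.0298 — 5 statements merged into one kernel-verified Lean document; each statement's English description precedes it below -/
import Mathlib

section
/- If β: [0,∞) → [0,∞) is subadditive (β(t₁+t₂) ≤ β(t₁)+β(t₂)) and ∫₁^∞ β(t)/t² dt < ∞, then lim_{t→∞} β(t)/t = 0. -/
open MeasureTheory Filter Topology Set

/-!
Averaging the subadditivity inequality `β t ≤ β s + β (t - s)` over `s ∈ [t/3, 2t/3]` gives
`(t/3) β t ≤ 2 ∫_{t/3}^{2t/3} β`, and on that interval `β s ≤ (2t/3)² β s / s²`. Hence
`β t / t ≤ (8/3) ∫_{t/3}^∞ β s / s² ds`, the tail of a convergent integral.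
-/

lemma mul_le_two_mul_intervalIntegral_of_subadditive {β : ℝ → ℝ}
    (hsubadd : ∀ t₁ t₂, 0 ≤ t₁ → 0 ≤ t₂ → β (t₁ + t₂) ≤ β t₁ + β t₂)
    {a b : ℝ} (ha : 0 ≤ a) (hab : a ≤ b) (hβ : IntervalIntegrable β volume a b) :
    (b - a) * β (a + b) ≤ 2 * ∫ s in a..b, β s := by
  have hβ_refl : IntervalIntegrable (fun s => β (a + b - s)) volume a b := by
    simpa using (hβ.comp_sub_left (a + b)).symm
  calc (b - a) * β (a + b) = ∫ _ in a..b, β (a + b) := by simp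
    _ ≤ ∫ s in a..b, (β s + β (a + b - s)) := by
        refine intervalIntegral.integral_mono_on hab intervalIntegrable_const
          (hβ.add hβ_refl) fun s hs => ?_
        simpa using hsubadd s (a + b - s) (ha.trans hs.1) (by linarith [hs.2])
    _ = 2 * ∫ s in a..b, β s := by
        rw [intervalIntegral.integral_add hβ hβ_refl, intervalIntegral.integral_comp_sub_left]
        simp only [add_sub_cancel_left, add_sub_cancel_right]
        ring

lemma intervalIntegrable_of_integrableOn_div_sq {f : ℝ → ℝ} {a b : ℝ} (ha : 0 < a)
    (hab : a ≤ b) (hf : IntegrableOn (fun s => f s / s ^ 2) (Ioc a b)) :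
    IntervalIntegrable f volume a b := by
  rw [intervalIntegrable_iff_integrableOn_Ioc_of_le hab]
  refine (hf.continuousOn_mul_of_subset (continuousOn_pow 2) isCompact_Icc measurableSet_Ioc
    Ioc_subset_Icc_self).congr_fun (fun s hs => ?_) measurableSet_Ioc
  have : s ≠ 0 := (ha.trans hs.1).ne'
  field_simp

lemma intervalIntegral_le_sq_mul_integral_Ioi_div_sq {f : ℝ → ℝ} {a b : ℝ} (ha : 0 < a)
    (hab : a ≤ b) (hf_nonneg : ∀ s, a ≤ s → 0 ≤ f s)
    (hf : IntegrableOn (fun s => f s / s ^ 2) (Ioi a)) :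
    ∫ s in a..b, f s ≤ b ^ 2 * ∫ s in Ioi a, f s / s ^ 2 := by
  have hf_Ioc : IntegrableOn (fun s => f s / s ^ 2) (Ioc a b) := hf.mono_set Ioc_subset_Ioi_self
  calc ∫ s in a..b, f s ≤ ∫ s in a..b, b ^ 2 * (f s / s ^ 2) := by
        refine intervalIntegral.integral_mono_on hab
          (intervalIntegrable_of_integrableOn_div_sq ha hab hf_Ioc)
          ((intervalIntegrable_iff_integrableOn_Ioc_of_le hab).2 (hf_Ioc.const_mul _))
          fun s hs => ?_
        have hs0 : 0 < s := ha.trans_le hs.1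
        calc f s = s ^ 2 * (f s / s ^ 2) := by field_simp
          _ ≤ b ^ 2 * (f s / s ^ 2) := by
            gcongr
            · exact div_nonneg (hf_nonneg s hs.1) (by positivity)
            · exact hs.2
    _ = b ^ 2 * ∫ s in Ioc a b, f s / s ^ 2 := by
        rw [intervalIntegral.integral_const_mul, intervalIntegral.integral_of_le hab]
    _ ≤ b ^ 2 * ∫ s in Ioi a, f s / s ^ 2 := by
        refine mul_le_mul_of_nonneg_left (setIntegral_mono_set hf ?_
          Ioc_subset_Ioi_self.eventuallyLE) (sq_nonneg b)
        filter_upwards [ae_restrict_mem measurableSet_Ioi] with s hs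
        exact div_nonneg (hf_nonneg s (le_of_lt hs)) (sq_nonneg s)

lemma div_le_integral_Ioi_div_sq_of_subadditive {β : ℝ → ℝ}
    (hnonneg : ∀ t, 0 ≤ t → 0 ≤ β t)
    (hsubadd : ∀ t₁ t₂, 0 ≤ t₁ → 0 ≤ t₂ → β (t₁ + t₂) ≤ β t₁ + β t₂)
    {t : ℝ} (ht : 0 < t) (hint : IntegrableOn (fun s => β s / s ^ 2) (Ioi (t / 3))) :
    β t / t ≤ 8 / 3 * ∫ s in Ioi (t / 3), β s / s ^ 2 := by
  have ha : 0 < t / 3 := by positivity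
  have hab : t / 3 ≤ 2 * t / 3 := by linarith
  have hβ : IntervalIntegrable β volume (t / 3) (2 * t / 3) :=
    intervalIntegrable_of_integrableOn_div_sq ha hab (hint.mono_set Ioc_subset_Ioi_self)
  have havg := mul_le_two_mul_intervalIntegral_of_subadditive hsubadd ha.le hab hβ
  have hweight := intervalIntegral_le_sq_mul_integral_Ioi_div_sq ha hab
    (fun s hs => hnonneg s (ha.le.trans hs)) hint
  rw [show t / 3 + 2 * t / 3 = t by ring] at havg
  rw [div_le_iff₀ ht]
  nlinarith

theorem stmt_1_general (β : ℝ → ℝ)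
    (hnonneg : ∀ t, 0 ≤ t → 0 ≤ β t)
    (hsubadd : ∀ t₁ t₂, 0 ≤ t₁ → 0 ≤ t₂ → β (t₁ + t₂) ≤ β t₁ + β t₂)
    (hint : IntegrableOn (fun t => β t / t ^ 2) (Set.Ici (1 : ℝ))) :
    Filter.Tendsto (fun t => β t / t) Filter.atTop (nhds 0) := by
  have htail : Tendsto (fun t : ℝ => 8 / 3 * ∫ s in Ioi (t / 3), β s / s ^ 2) atTop (𝓝 0) := by
    simpa using (tendsto_integral_Ioi_zero (tendsto_id.atTop_div_const (by norm_num))).const_mul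
      (8 / 3 : ℝ)
  refine tendsto_of_tendsto_of_tendsto_of_le_of_le' tendsto_const_nhds htail ?_ ?_
  · filter_upwards [eventually_gt_atTop 0] with t ht
    exact div_nonneg (hnonneg t ht.le) ht.le
  · filter_upwards [eventually_ge_atTop 3] with t ht
    refine div_le_integral_Ioi_div_sq_of_subadditive hnonneg hsubadd (by linarith) ?_
    exact hint.mono_set (Ioi_subset_Ici (by linarith))

/-- If β : [0,∞) → [0,∞) is subadditive and ∫₁^∞ β(t)/t² dt < ∞,
then β(t)/t → 0 as t → ∞. -/
theorem stmt_1 (β : ℝ → ℝ)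
    (hmeas : Measurable β)
    (hnonneg : ∀ t, 0 ≤ t → 0 ≤ β t)
    (hsubadd : ∀ t₁ t₂, 0 ≤ t₁ → 0 ≤ t₂ → β (t₁ + t₂) ≤ β t₁ + β t₂)
    (hint : IntegrableOn (fun t => β t / t ^ 2) (Set.Ici (1 : ℝ))) :
    Filter.Tendsto (fun t => β t / t) Filter.atTop (nhds 0) :=
  stmt_1_general β hnonneg hsubadd hint
end

section
/- Let (a_k) be a sequence of positive reals with ∑ a_k = 1. Then the infinite product f(z) = ∏_{k=1}^∞ (sin(a_k z/2)/(a_k z/2))² converges locally uniformly on ℂ and defines an entire function, and for all z ∈ ℂ and r > 0, |f(rz)| ≤ e^{r|Im z|}. -/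
open Complex

/-- sinc-type factor: sin(w)/w extended by 1 at w = 0. -/
noncomputable def sincFactor (w : ℂ) : ℂ := if w = 0 then 1 else Complex.sin w / w

/-!
Since `|sin w| ≤ |w| e^{|Im w|}`, each factor satisfies `|sinc(a_k z/2)²| ≤ e^{a_k |Im z|}`, so
every partial product is bounded by `e^{(∑ a_k) |Im z|} ≤ e^{|Im z|}`, and this bound passes to
the limit. Convergence: `sinc² - 1` vanishes at `0` and is holomorphic, so it is `O(|w|)` on
bounded sets; on `|z| ≤ R` the `k`-th factor is therefore `1 + O(a_k)`, a summable defect, which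
gives uniform convergence on compacts, and the limit is entire as a locally uniform limit of
entire functions.
-/

open Filter Metric

theorem sincFactor_eq_dslope : sincFactor = dslope sin 0 := by
  ext w
  rcases eq_or_ne w 0 with rfl | hw
  · simp [sincFactor, dslope_same, Complex.deriv_sin]
  · simp [sincFactor, hw, dslope_of_ne, slope_def_field, div_eq_inv_mul]

@[simp]
theorem sincFactor_zero : sincFactor 0 = 1 := if_pos rfl

@[fun_prop]
theorem differentiable_sincFactor : Differentiable ℂ sincFactor := by
  rw [sincFactor_eq_dslope, ← differentiableOn_univ,
    differentiableOn_dslope univ_mem, differentiableOn_univ]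
  exact Complex.differentiable_sin

theorem Real.sinh_le_mul_exp (t : ℝ) : Real.sinh t ≤ t * Real.exp t := by
  have h := Real.add_one_le_exp (-2 * t)
  have hexp : Real.exp (-t) = Real.exp t * Real.exp (-2 * t) := by
    rw [← Real.exp_add]; ring_nf
  rw [Real.sinh_eq, hexp]
  nlinarith [Real.exp_pos t]

theorem Complex.norm_sin_le_norm_mul_exp (w : ℂ) : ‖sin w‖ ≤ ‖w‖ * Real.exp |w.im| := by
  have hsq : ‖sin w‖ ^ 2 = Real.sin w.re ^ 2 + Real.sinh w.im ^ 2 := by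
    rw [Complex.sq_norm, Complex.sin_eq, ← ofReal_sin, ← ofReal_cos, ← ofReal_cosh,
      ← ofReal_sinh]
    simp only [normSq_apply, add_re, add_im, mul_re, mul_im, I_re, I_im, ofReal_re, ofReal_im]
    nlinarith [Real.sin_sq_add_cos_sq w.re, Real.cosh_sq w.im]
  have hsinh : Real.sinh w.im ^ 2 ≤ (w.im * Real.exp |w.im|) ^ 2 := by
    rw [sq_le_sq, Real.abs_sinh, abs_mul, Real.abs_exp]
    exact Real.sinh_le_mul_exp _
  have hexp : 1 ≤ Real.exp |w.im| ^ 2 := one_le_pow₀ (Real.one_le_exp (abs_nonneg _))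
  rw [← pow_le_pow_iff_left₀ (norm_nonneg _) (by positivity) two_ne_zero, hsq, mul_pow,
    Complex.sq_norm, normSq_apply]
  nlinarith [Real.sin_sq_le_sq (x := w.re), sq_nonneg w.re]

theorem norm_sincFactor_le (w : ℂ) : ‖sincFactor w‖ ≤ Real.exp |w.im| := by
  rcases eq_or_ne w 0 with rfl | hw
  · simp [sincFactor]
  · rw [sincFactor, if_neg hw, norm_div, div_le_iff₀ (norm_pos_iff.mpr hw), mul_comm]
    exact Complex.norm_sin_le_norm_mul_exp w

theorem Differentiable.exists_norm_sub_le_mul_norm {𝕜 E : Type*} [NontriviallyNormedField 𝕜]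
    [ProperSpace 𝕜] [NormedAddCommGroup E] [NormedSpace 𝕜 E] {g : 𝕜 → E}
    (hg : Differentiable 𝕜 g) (R : ℝ) :
    ∃ M, 0 ≤ M ∧ ∀ w ∈ closedBall (0 : 𝕜) R, ‖g w - g 0‖ ≤ M * ‖w‖ := by
  have hcont : ContinuousOn (dslope g 0) (closedBall 0 R) :=
    ((continuousOn_dslope univ_mem).2 ⟨hg.continuous.continuousOn, hg 0⟩).mono
      (Set.subset_univ _)
  obtain ⟨M, hM⟩ := (isCompact_closedBall (0 : 𝕜) R).exists_bound_of_continuousOn hcont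
  refine ⟨max M 0, le_max_right M 0, fun w hw => ?_⟩
  rw [← sub_smul_dslope, sub_zero, norm_smul, mul_comm]
  exact mul_le_mul_of_nonneg_right ((hM w hw).trans (le_max_left M 0)) (norm_nonneg w)

theorem norm_sincFactor_sq_le (t : ℝ) (ht : 0 ≤ t) (z : ℂ) :
    ‖sincFactor (t * z / 2) ^ 2‖ ≤ Real.exp (t * |z.im|) := by
  have him : |((t : ℂ) * z / 2).im| = t / 2 * |z.im| := by
    simp only [div_ofNat_im, im_ofReal_mul]
    rw [abs_div, abs_mul, abs_of_nonneg ht, abs_two]; ring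
  calc ‖sincFactor (t * z / 2) ^ 2‖ ≤ Real.exp |((t : ℂ) * z / 2).im| ^ 2 := by
        rw [norm_pow]; gcongr; exact norm_sincFactor_le _
    _ = Real.exp (t * |z.im|) := by rw [← Real.exp_nat_mul, him]; ring_nf

theorem norm_prod_sincFactor_sq_le {ι : Type*} (s : Finset ι) {a : ι → ℝ} (ha : ∀ k, 0 ≤ a k)
    (z : ℂ) :
    ‖∏ k ∈ s, sincFactor (a k * z / 2) ^ 2‖ ≤ Real.exp ((∑ k ∈ s, a k) * |z.im|) := by
  rw [norm_prod, Finset.sum_mul, Real.exp_sum]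
  exact Finset.prod_le_prod (fun k _ => norm_nonneg _)
    fun k _ => norm_sincFactor_sq_le (a k) (ha k) z

theorem exists_norm_sincFactor_sq_sub_one_le (R : ℝ) :
    ∃ M, ∀ t ∈ Set.Icc (0 : ℝ) 1, ∀ z ∈ closedBall (0 : ℂ) R,
      ‖sincFactor (t * z / 2) ^ 2 - 1‖ ≤ M * t := by
  obtain ⟨M, hM0, hM⟩ := (differentiable_sincFactor.pow 2).exists_norm_sub_le_mul_norm (R / 2)
  refine ⟨M * (R / 2), fun t ht z hz => ?_⟩
  have hz : ‖z‖ ≤ R := mem_closedBall_zero_iff.1 hz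
  have hw : ‖(t : ℂ) * z / 2‖ ≤ t * (R / 2) := by
    rw [norm_div, norm_mul, Complex.norm_real, Real.norm_of_nonneg ht.1, Complex.norm_two]
    linarith [mul_le_mul_of_nonneg_left hz ht.1]
  have hwR : ‖(t : ℂ) * z / 2‖ ≤ R / 2 := hw.trans (by nlinarith [ht.2, norm_nonneg z])
  calc ‖sincFactor (t * z / 2) ^ 2 - 1‖ ≤ M * ‖(t : ℂ) * z / 2‖ := by
        simpa using hM _ (mem_closedBall_zero_iff.2 hwR)
    _ ≤ M * (t * (R / 2)) := by gcongr
    _ = M * (R / 2) * t := by ring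

theorem hasProdUniformlyOn_sincFactor_sq {a : ℕ → ℝ} (ha : ∀ k, 0 ≤ a k) (hsum : HasSum a 1)
    (R : ℝ) :
    HasProdUniformlyOn (fun k z => sincFactor (a k * z / 2) ^ 2)
      (fun z => ∏' k, sincFactor (a k * z / 2) ^ 2) (closedBall 0 R) := by
  obtain ⟨M, hM⟩ := exists_norm_sincFactor_sq_sub_one_le R
  have ha1 : ∀ k, a k ≤ 1 := fun k => le_hasSum hsum k fun j _ => ha j
  have hdiff : ∀ k, Differentiable ℂ fun z : ℂ => sincFactor (a k * z / 2) ^ 2 - 1 := fun k => by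
    fun_prop
  simpa using Summable.hasProdUniformlyOn_nat_one_add (isCompact_closedBall 0 R)
    (hsum.summable.mul_left M) (Eventually.of_forall fun k => hM (a k) ⟨ha k, ha1 k⟩)
    fun k => (hdiff k).continuous.continuousOn

theorem tendstoLocallyUniformly_prod_range_sincFactor_sq {a : ℕ → ℝ} (ha : ∀ k, 0 ≤ a k)
    (hsum : HasSum a 1) :
    TendstoLocallyUniformly (fun n z => ∏ k ∈ Finset.range n, sincFactor (a k * z / 2) ^ 2)
      (fun z => ∏' k, sincFactor (a k * z / 2) ^ 2) atTop := by
  refine tendstoLocallyUniformly_iff_forall_isCompact.2 fun K hK => ?_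
  obtain ⟨R, hKR⟩ := hK.isBounded.subset_closedBall 0
  exact (hasProdUniformlyOn_sincFactor_sq ha hsum R).tendstoUniformlyOn_finsetRange.mono hKR

/-- For positive (a_k) with ∑ a_k = 1, the product
f(z) = ∏_{k=1}^∞ (sin(a_k z/2)/(a_k z/2))² converges locally uniformly to an
entire function f, and |f(rz)| ≤ e^{r|Im z|} for all z ∈ ℂ, r > 0. -/
theorem stmt_7 (a : ℕ → ℝ) (hpos : ∀ k, 0 < a k)
    (hsum : HasSum a 1) :
    ∃ f : ℂ → ℂ,
      TendstoLocallyUniformly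
        (fun n (z : ℂ) => ∏ k ∈ Finset.range n, (sincFactor ((a k : ℂ) * z / 2)) ^ 2)
        f Filter.atTop ∧
      Differentiable ℂ f ∧
      ∀ (z : ℂ) (r : ℝ), 0 < r →
        ‖f (r * z)‖ ≤ Real.exp (r * |z.im|) := by
  have ha : ∀ k, 0 ≤ a k := fun k => (hpos k).le
  have hlim := tendstoLocallyUniformly_prod_range_sincFactor_sq ha hsum
  refine ⟨_, hlim, ?_, fun z r hr => ?_⟩
  · have hdiff : ∀ n, DifferentiableOn ℂ
        (fun z : ℂ => ∏ k ∈ Finset.range n, sincFactor (a k * z / 2) ^ 2) Set.univ :=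
      fun n => by fun_prop
    exact differentiableOn_univ.1 <| (tendstoLocallyUniformlyOn_univ.2 hlim).differentiableOn
      (Eventually.of_forall hdiff) isOpen_univ
  · have hprod := ((hasProdUniformlyOn_sincFactor_sq ha hsum ‖(r : ℂ) * z‖).hasProd
      (mem_closedBall_zero_iff.2 le_rfl)).tendsto_prod_nat
    refine le_of_tendsto' hprod.norm fun n => (norm_prod_sincFactor_sq_le _ ha _).trans ?_
    rw [im_ofReal_mul, abs_mul, abs_of_pos hr]
    exact Real.exp_le_exp.2 <| mul_le_of_le_one_left (by positivity) <|
      sum_le_hasSum _ (fun k _ => ha k) hsum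
end

section
/- Let K: ℂ → ℂ be an entire function, r > 0, and α: ℝ → (0,∞) even, non-decreasing on [0,∞), submultiplicative, with |K(z)| ≤ c_r·e^{r|Im z|}/α(|z|) for some c_r > 0 and all z ∈ ℂ (with K(rz) in place where relevant). Then for K_r(z) := r·K(rz), each derivative satisfies |K_r^{(n)}(t)| ≤ c'_r·√(2πn)·α(n/r)·r^n/α(|t|) for all t ∈ ℝ and n ∈ ℕ, where c'_r = e^{1/12}·r·c_r. -/
/-!
Cauchy's estimate on the circle of radius `n / r` about `t`. On that circle `|Im z| ≤ n / r`,
so `e^{r |Im z|} ≤ eⁿ`, and monotonicity with submultiplicativity give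
`α |t| ≤ α ‖z‖ · α (n / r)`. The estimate is then `n! eⁿ (r / n)ⁿ` times the remaining factors,
and Robbins' form of Stirling's formula, `n! ≤ √(2πn) (n / e)ⁿ e^{1/(12n)}`, bounds
`n! eⁿ / nⁿ` by `e^{1/12} √(2πn)`.
-/

open Real Filter Topology Nat

namespace Stirling

theorem monotone_log_stirlingSeq_succ_sub_one_div :
    Monotone fun k : ℕ ↦ log (stirlingSeq (k + 1)) - 1 / (12 * ((k : ℝ) + 1)) := by
  refine monotone_nat_of_le_succ fun k ↦ ?_
  have robbins := log_stirlingSeq_sdiff_le (k + 1)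
  have telescope : 1 / (12 * ((k : ℝ) + 1)) - 1 / (12 * ((k : ℝ) + 1 + 1)) =
      1 / (12 * ((k : ℝ) + 1) * ((k : ℝ) + 1 + 1)) := by
    field_simp; ring
  push_cast at robbins ⊢
  linarith

theorem stirlingSeq_le_sqrt_pi_mul_exp (n : ℕ) : stirlingSeq n ≤ √π * exp (1 / (12 * n)) := by
  rcases n with _ | n
  · simp only [stirlingSeq_zero]; positivity
  have hlim : Tendsto (fun k : ℕ ↦ log (stirlingSeq (k + 1)) - 1 / (12 * ((k : ℝ) + 1))) atTop
      (𝓝 (log √π - 12⁻¹ * 0)) := by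
    refine ((continuousAt_log (by positivity)).tendsto.comp
      (tendsto_stirlingSeq_sqrt_pi.comp (tendsto_add_atTop_nat 1))).sub ?_
    simpa [mul_comm, div_mul_eq_div_div, div_eq_mul_inv] using
      (tendsto_one_div_add_atTop_nhds_zero_nat (𝕜 := ℝ)).const_mul 12⁻¹
  have hle := monotone_log_stirlingSeq_succ_sub_one_div.ge_of_tendsto hlim n
  rw [mul_zero, sub_zero, sub_le_iff_le_add] at hle
  calc stirlingSeq (n + 1) = exp (log (stirlingSeq (n + 1))) := (exp_log (stirlingSeq'_pos n)).symm
    _ ≤ exp (log √π + 1 / (12 * ((n : ℝ) + 1))) := exp_le_exp.2 hle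
    _ = √π * exp (1 / (12 * ((n + 1 : ℕ) : ℝ))) := by
      rw [exp_add, exp_log (by positivity)]; push_cast; rfl

theorem factorial_le_stirling_mul_exp {n : ℕ} (hn : n ≠ 0) :
    (n ! : ℝ) ≤ √(2 * π * n) * (n / exp 1) ^ n * exp (1 / (12 * n)) := by
  have hden : 0 < √(2 * n) * (n / exp 1) ^ n := by
    have : (0 : ℝ) < n := by positivity
    positivity
  have hfac : (n ! : ℝ) = stirlingSeq n * (√(2 * n) * (n / exp 1) ^ n) := by
    rw [stirlingSeq, div_mul_cancel₀ _ hden.ne']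
  rw [hfac, show √(2 * π * n) = √π * √(2 * n) by rw [← sqrt_mul pi_pos.le]; ring_nf]
  calc stirlingSeq n * (√(2 * n) * (n / exp 1) ^ n)
      ≤ √π * exp (1 / (12 * n)) * (√(2 * n) * (n / exp 1) ^ n) := by
        gcongr; exact stirlingSeq_le_sqrt_pi_mul_exp n
    _ = _ := by ring

end Stirling

section Weight

variable {α : ℝ → ℝ}

theorem apply_norm_le_apply_norm_mul_apply_norm_sub {E : Type*} [SeminormedAddCommGroup E]
    (hαmono : ∀ s t, 0 ≤ s → s ≤ t → α s ≤ α t) (hαsub : ∀ s t, α (s + t) ≤ α s * α t)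
    (w z : E) : α ‖w‖ ≤ α ‖z‖ * α ‖w - z‖ :=
  (hαmono _ _ (norm_nonneg w) (norm_le_norm_add_norm_sub' w z)).trans (hαsub _ _)

theorem norm_scaled_le_of_mem_sphere (K : ℂ → ℂ) (hαpos : ∀ t, 0 < α t)
    (hαmono : ∀ s t, 0 ≤ s → s ≤ t → α s ≤ α t) (hαsub : ∀ s t, α (s + t) ≤ α s * α t)
    {r c : ℝ} (hr : 0 < r) (hc : 0 ≤ c)
    (hbound : ∀ z : ℂ, ‖K (r * z)‖ ≤ c * exp (r * |z.im|) / α ‖z‖)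
    (t : ℝ) {R : ℝ} {z : ℂ} (hz : z ∈ Metric.sphere (t : ℂ) R) :
    ‖(r : ℂ) * K (r * z)‖ ≤ r * c * exp (r * R) * α R / α |t| := by
  have hdist : ‖z - t‖ = R := mem_sphere_iff_norm.1 hz
  have him : |z.im| ≤ R := by simpa [hdist] using Complex.abs_im_le_norm (z - t)
  have hweight : α |t| ≤ α ‖z‖ * α R := by
    simpa [norm_sub_rev, hdist] using
      apply_norm_le_apply_norm_mul_apply_norm_sub hαmono hαsub (t : ℂ) z
  have hα := hαpos ‖z‖
  have hαt := hαpos |t|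
  calc ‖(r : ℂ) * K (r * z)‖ = r * ‖K (r * z)‖ := by
        rw [norm_mul, Complex.norm_real, norm_of_nonneg hr.le]
    _ ≤ r * (c * exp (r * |z.im|) / α ‖z‖) := by gcongr; exact hbound z
    _ ≤ r * (c * exp (r * R) * α R / α |t|) := by
        gcongr r * ?_
        rw [div_le_div_iff₀ hα hαt]
        calc c * exp (r * |z.im|) * α |t| ≤ c * exp (r * R) * (α ‖z‖ * α R) := by gcongr
          _ = _ := by ring
    _ = _ := by ring

end Weight

theorem stmt_9_general (K : ℂ → ℂ) (hK : Differentiable ℂ K)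
    (α : ℝ → ℝ)
    (hαpos : ∀ t, 0 < α t)
    (hαmono : ∀ s t, 0 ≤ s → s ≤ t → α s ≤ α t)
    (hαsub : ∀ s t, α (s + t) ≤ α s * α t)
    (r : ℝ) (hr : 0 < r) (c : ℝ) (hc : 0 < c)
    (hbound : ∀ z : ℂ, ‖K (r * z)‖ ≤ c * Real.exp (r * |z.im|) / α ‖z‖) :
    ∀ (n : ℕ), 1 ≤ n → ∀ t : ℝ,
      ‖iteratedDeriv n (fun z : ℂ => (r : ℂ) * K ((r : ℂ) * z)) (t : ℂ)‖
        ≤ (Real.exp (1 / 12) * r * c) * Real.sqrt (2 * π * n) * α ((n : ℝ) / r) * r ^ n / α |t| := by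
  intro n hn t
  have hn₁ : (1 : ℝ) ≤ n := by exact_mod_cast hn
  have hR : 0 < (n : ℝ) / r := by positivity
  have hf : Differentiable ℂ fun z : ℂ => (r : ℂ) * K ((r : ℂ) * z) :=
    (hK.comp (differentiable_id.const_mul _)).const_mul _
  have hαR := hαpos ((n : ℝ) / r)
  have hαt := hαpos |t|
  calc _ ≤ n ! * (r * c * exp (r * (n / r)) * α (n / r) / α |t|) / (n / r) ^ n :=
        Complex.norm_iteratedDeriv_le_of_forall_mem_sphere_norm_le n hR hf.diffContOnCl
          fun z hz ↦ norm_scaled_le_of_mem_sphere K hαpos hαmono hαsub hr hc.le hbound t hz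
    _ ≤ √(2 * π * n) * (n / exp 1) ^ n * exp (1 / (12 * n)) *
          (r * c * exp (r * (n / r)) * α (n / r) / α |t|) / (n / r) ^ n := by
        gcongr; exact Stirling.factorial_le_stirling_mul_exp (by omega)
    _ ≤ √(2 * π * n) * (n / exp 1) ^ n * exp (1 / 12) *
          (r * c * exp (r * (n / r)) * α (n / r) / α |t|) / (n / r) ^ n := by
        gcongr
        linarith
    _ = _ := by
        rw [mul_div_cancel₀ _ hr.ne', ← exp_one_pow, div_pow, div_pow]
        field_simp

/-- Derivative estimates for the scaled kernel K_r(z) = r·K(rz): if K is entire and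
|K(rz)| ≤ c_r·e^{r|Im z|}/α(|z|), with α positive, even, non-decreasing on [0,∞) and
submultiplicative, then |K_r^{(n)}(t)| ≤ e^{1/12}·r·c_r·√(2πn)·α(n/r)·rⁿ/α(|t|)
for all real t and n ≥ 1. -/
theorem stmt_9 (K : ℂ → ℂ) (hK : Differentiable ℂ K)
    (α : ℝ → ℝ)
    (hαpos : ∀ t, 0 < α t)
    (hαeven : ∀ t, α (-t) = α t)
    (hαmono : ∀ s t, 0 ≤ s → s ≤ t → α s ≤ α t)
    (hαsub : ∀ s t, α (s + t) ≤ α s * α t)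
    (r : ℝ) (hr : 0 < r) (c : ℝ) (hc : 0 < c)
    (hbound : ∀ z : ℂ, ‖K (r * z)‖ ≤ c * Real.exp (r * |z.im|) / α ‖z‖) :
    ∀ (n : ℕ), 1 ≤ n → ∀ t : ℝ,
      ‖iteratedDeriv n (fun z : ℂ => (r : ℂ) * K ((r : ℂ) * z)) (t : ℂ)‖
        ≤ (Real.exp (1 / 12) * r * c) * Real.sqrt (2 * π * n) * α ((n : ℝ) / r) * r ^ n / α |t| :=
  stmt_9_general K hK α hαpos hαmono hαsub r hr c hc hbound
end

section
/- Let α: ℝ → ℝ satisfy α(t) ≥ 1, be even, non-decreasing on [0,∞), submultiplicative, and have polynomial growth α(t) ≤ M(1+|t|)^{2m} for some M > 0, m ∈ ℕ. Then the function K̃(z) = (1/K_m)·(sin(z/(2m))/(z/(2m)))^{2m}, where K_m = ∫_{-∞}^∞ (sin(x/(2m))/(x/(2m)))^{2m} dx, satisfies |K̃(rz)| ≤ C̃_r·e^{r|Im z|}/α(|z|) with C̃_r = (M/K_m)·(1 + 2m/r)^{2m} for all r > 0 and z ∈ ℂ. -/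
/-!
Both `‖sin w‖` and `‖cos w‖` are at most `exp |Im w|`; the mean value inequality on the strip
`|Im u| ≤ |Im w|` then gives `‖sin w‖ ≤ ‖w‖ exp |Im w|`, so `‖sin w / w‖ ≤ exp |Im w| · min 1 ‖w‖⁻¹`.
For `w = c z` this yields `‖sinc (c z)‖ (1 + ‖z‖) ≤ (1 + c⁻¹) exp (c |Im z|)`, and raising it to the
power `2m` with `c = r / 2m` absorbs the growth bound `α t ≤ M (1 + |t|)^{2m}`.
-/

open Real

/-- sinc-type factor: sin(w)/w extended by 1 at w = 0 (complex version). -/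
noncomputable def sincFactorC (w : ℂ) : ℂ := if w = 0 then 1 else Complex.sin w / w

/-- real sinc-type factor. -/
noncomputable def sincFactorR (w : ℝ) : ℝ := if w = 0 then 1 else Real.sin w / w

namespace Complex

lemma norm_exp_mul_I_le (u : ℂ) : ‖exp (u * I)‖ ≤ Real.exp |u.im| := by
  rw [norm_exp]
  exact Real.exp_le_exp.2 (by simpa using neg_le_abs u.im)

lemma norm_exp_neg_mul_I_le (u : ℂ) : ‖exp (-u * I)‖ ≤ Real.exp |u.im| := by
  rw [norm_exp]
  exact Real.exp_le_exp.2 (by simpa using le_abs_self u.im)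

lemma norm_sin_le_exp_abs_im (u : ℂ) : ‖sin u‖ ≤ Real.exp |u.im| := by
  have h : ‖2 * sin u‖ ≤ 2 * Real.exp |u.im| := by
    rw [two_sin, norm_mul, norm_I, mul_one, two_mul]
    exact (norm_sub_le _ _).trans (add_le_add (norm_exp_neg_mul_I_le u) (norm_exp_mul_I_le u))
  rw [norm_mul, Complex.norm_two] at h
  linarith

lemma norm_cos_le_exp_abs_im (u : ℂ) : ‖cos u‖ ≤ Real.exp |u.im| := by
  have h : ‖2 * cos u‖ ≤ 2 * Real.exp |u.im| := by
    rw [two_cos, two_mul]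
    exact (norm_add_le _ _).trans (add_le_add (norm_exp_mul_I_le u) (norm_exp_neg_mul_I_le u))
  rw [norm_mul, Complex.norm_two] at h
  linarith

lemma norm_sin_le_norm_mul_exp_abs_im (w : ℂ) : ‖sin w‖ ≤ ‖w‖ * Real.exp |w.im| := by
  have hcos : ∀ u ∈ {u : ℂ | u.im ≤ |w.im|} ∩ {u | -|w.im| ≤ u.im},
      ‖deriv sin u‖ ≤ Real.exp |w.im| := fun u hu => by
    rw [deriv_sin]
    exact (norm_cos_le_exp_abs_im u).trans (Real.exp_le_exp.2 (abs_le.2 ⟨hu.2, hu.1⟩))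
  have hstrip := (convex_halfSpace_im_le |w.im|).inter (convex_halfSpace_im_ge (-|w.im|))
  have h := hstrip.norm_image_sub_le_of_norm_deriv_le (fun u _ => differentiableAt_sin) hcos
    (x := 0) (y := w) ⟨by simp, by simp⟩ ⟨le_abs_self w.im, neg_abs_le w.im⟩
  simpa [mul_comm] using h

end Complex

lemma norm_sincFactorC_le (w : ℂ) : ‖sincFactorC w‖ ≤ Real.exp |w.im| := by
  unfold sincFactorC
  split_ifs with hw
  · simp
  · rw [norm_div]
    exact div_le_of_le_mul₀ (norm_nonneg w) (Real.exp_pos _).le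
      (by rw [mul_comm]; exact Complex.norm_sin_le_norm_mul_exp_abs_im w)

lemma norm_sincFactorC_mul_norm_le (w : ℂ) : ‖sincFactorC w‖ * ‖w‖ ≤ Real.exp |w.im| := by
  unfold sincFactorC
  split_ifs with hw
  · simp [hw]
  · rw [norm_div, div_mul_cancel₀ _ (norm_ne_zero_iff.2 hw)]
    exact Complex.norm_sin_le_exp_abs_im w

lemma norm_sincFactorC_mul_one_add_le {c : ℝ} (hc : 0 < c) (z : ℂ) :
    ‖sincFactorC (c * z)‖ * (1 + ‖z‖) ≤ (1 + c⁻¹) * Real.exp (c * |z.im|) := by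
  have him : |((c : ℂ) * z).im| = c * |z.im| := by
    rw [Complex.im_ofReal_mul, abs_mul, abs_of_pos hc]
  have hnorm : ‖(c : ℂ) * z‖ = c * ‖z‖ := by
    rw [norm_mul, Complex.norm_real, Real.norm_of_nonneg hc.le]
  have hsmall := norm_sincFactorC_le (c * z)
  have hlarge := norm_sincFactorC_mul_norm_le (c * z)
  rw [him] at hsmall hlarge
  rw [hnorm] at hlarge
  calc ‖sincFactorC (c * z)‖ * (1 + ‖z‖)
      = ‖sincFactorC (c * z)‖ + c⁻¹ * (‖sincFactorC (c * z)‖ * (c * ‖z‖)) := by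
        field_simp
    _ ≤ Real.exp (c * |z.im|) + c⁻¹ * Real.exp (c * |z.im|) := by gcongr
    _ = (1 + c⁻¹) * Real.exp (c * |z.im|) := by ring

lemma norm_sincFactorC_pow_mul_le_of_growth {α : ℝ → ℝ} {M c : ℝ} {n : ℕ} (hM : 0 ≤ M)
    (hα : ∀ t, α t ≤ M * (1 + |t|) ^ n) (hc : 0 < c) (z : ℂ) :
    ‖sincFactorC (c * z)‖ ^ n * α ‖z‖ ≤ M * (1 + c⁻¹) ^ n * Real.exp (n * c * |z.im|) := by
  have hαz : α ‖z‖ ≤ M * (1 + ‖z‖) ^ n := by simpa using hα ‖z‖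
  calc ‖sincFactorC (c * z)‖ ^ n * α ‖z‖
      ≤ ‖sincFactorC (c * z)‖ ^ n * (M * (1 + ‖z‖) ^ n) := by gcongr
    _ = M * (‖sincFactorC (c * z)‖ * (1 + ‖z‖)) ^ n := by rw [mul_pow]; ring
    _ ≤ M * ((1 + c⁻¹) * Real.exp (c * |z.im|)) ^ n := by
        gcongr M * ?_ ^ n
        exact norm_sincFactorC_mul_one_add_le hc z
    _ = M * (1 + c⁻¹) ^ n * Real.exp (n * c * |z.im|) := by
        rw [mul_pow, ← Real.exp_nat_mul]; ring_nf

theorem stmt_11_general (m : ℕ) (hm : 1 ≤ m) (M : ℝ) (hM : 0 < M)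
    (α : ℝ → ℝ)
    (hα1 : ∀ t, 1 ≤ α t)
    (hgrowth : ∀ t : ℝ, α t ≤ M * (1 + |t|) ^ (2 * m)) :
    ∀ (r : ℝ), 0 < r → ∀ z : ℂ,
      ‖(1 / (∫ x : ℝ, (sincFactorR (x / (2 * m))) ^ (2 * m) : ℂ)) *
          (sincFactorC ((r : ℂ) * z / (2 * m))) ^ (2 * m)‖
        ≤ (M / (∫ x : ℝ, (sincFactorR (x / (2 * m))) ^ (2 * m))) * (1 + 2 * m / r) ^ (2 * m) *
            Real.exp (r * |z.im|) / α ‖z‖ := by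
  intro r hr z
  set K : ℝ := ∫ x : ℝ, (sincFactorR (x / (2 * m))) ^ (2 * m)
  -- `K ≥ 0` suffices: both sides carry the factor `K⁻¹`.
  have hK : 0 ≤ K := MeasureTheory.integral_nonneg fun x => Even.pow_nonneg ⟨m, two_mul m⟩ _
  have hKc : (∫ x : ℝ, (sincFactorR (x / (2 * m)) : ℂ) ^ (2 * m)) = (K : ℂ) := by
    simp_rw [← Complex.ofReal_pow]
    exact integral_ofReal
  have h2m : (0 : ℝ) < 2 * m := by positivity
  have hz : (r : ℂ) * z / (2 * m) = ((r / (2 * m) : ℝ) : ℂ) * z := by push_cast; ring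
  have key := norm_sincFactorC_pow_mul_le_of_growth hM.le hgrowth (div_pos hr h2m) z
  rw [inv_div, Nat.cast_mul, Nat.cast_two, mul_div_cancel₀ r h2m.ne'] at key
  rw [hKc, hz, norm_mul, norm_pow, norm_div, norm_one, Complex.norm_real,
    Real.norm_of_nonneg hK, one_div]
  calc K⁻¹ * ‖sincFactorC (↑(r / (2 * ↑m)) * z)‖ ^ (2 * m)
      ≤ K⁻¹ * (M * (1 + 2 * m / r) ^ (2 * m) * Real.exp (r * |z.im|) / α ‖z‖) := by
        gcongr
        exact (le_div_iff₀ (one_pos.trans_le (hα1 _))).2 key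
    _ = _ := by ring

/-- For α ≥ 1, even, non-decreasing on [0,∞), submultiplicative with polynomial
growth α(t) ≤ M(1+|t|)^{2m}, the Fejér-type kernel
K̃(z) = (1/K_m)(sin(z/2m)/(z/2m))^{2m}, K_m = ∫ (sin(x/2m)/(x/2m))^{2m} dx,
satisfies |K̃(rz)| ≤ (M/K_m)(1+2m/r)^{2m}·e^{r|Im z|}/α(|z|) for r > 0, z ∈ ℂ. -/
theorem stmt_11 (m : ℕ) (hm : 1 ≤ m) (M : ℝ) (hM : 0 < M)
    (α : ℝ → ℝ)
    (hα1 : ∀ t, 1 ≤ α t)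
    (hαeven : ∀ t, α (-t) = α t)
    (hαmono : ∀ s t, 0 ≤ s → s ≤ t → α s ≤ α t)
    (hαsub : ∀ s t, α (s + t) ≤ α s * α t)
    (hgrowth : ∀ t : ℝ, α t ≤ M * (1 + |t|) ^ (2 * m)) :
    ∀ (r : ℝ), 0 < r → ∀ z : ℂ,
      ‖(1 / (∫ x : ℝ, (sincFactorR (x / (2 * m))) ^ (2 * m) : ℂ)) *
          (sincFactorC ((r : ℂ) * z / (2 * m))) ^ (2 * m)‖
        ≤ (M / (∫ x : ℝ, (sincFactorR (x / (2 * m))) ^ (2 * m))) * (1 + 2 * m / r) ^ (2 * m) *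
            Real.exp (r * |z.im|) / α ‖z‖ :=
  stmt_11_general m hm M hM α hα1 hgrowth
end

section
/- Let A generate a C₀-group {U(t)} on a Banach space X with M_U(t) = sup_{|τ|≤t}‖U(τ)‖. If x ∈ D(A^m) for m ∈ ℕ, then for every k ∈ ℕ and r ≥ 1: ω̃_{k+m}(1/r, x, A) ≤ (M_U(m/r)/r^m) · ω̃_k(1/r, A^m x, A). -/
open Filter Topology MeasureTheory

variable {X : Type*} [NormedAddCommGroup X] [NormedSpace ℝ X] [CompleteSpace X]

/-- `M_U(t) = sup_{|τ| ≤ t} ‖U(τ)‖`. -/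
noncomputable def groupBound (U : ℝ → X →L[ℝ] X) (t : ℝ) : ℝ :=
  sSup {a : ℝ | ∃ τ : ℝ, |τ| ≤ t ∧ a = ‖U τ‖}

/-- `ω_k(t,x) = sup_{0 ≤ τ ≤ t} ‖(U(τ)-I)^k x‖`, the k-th modulus of continuity. -/
noncomputable def modulus (U : ℝ → X →L[ℝ] X) (k : ℕ) (t : ℝ) (x : X) : ℝ :=
  sSup {a : ℝ | ∃ τ : ℝ, 0 ≤ τ ∧ τ ≤ t ∧ a = ‖((U τ - 1) ^ k) x‖}

/-- `ω̃_k(t,x) = sup_{|τ| ≤ t} ‖(U(τ)-I)^k x‖`, the symmetric modulus of continuity. -/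
noncomputable def symModulus (U : ℝ → X →L[ℝ] X) (k : ℕ) (t : ℝ) (x : X) : ℝ :=
  sSup {a : ℝ | ∃ τ : ℝ, |τ| ≤ t ∧ a = ‖((U τ - 1) ^ k) x‖}

/-- `U` is a `C₀`-group of bounded operators. -/
structure IsC0Group (U : ℝ → X →L[ℝ] X) : Prop where
  map_zero : U 0 = 1
  map_add : ∀ s t : ℝ, U (s + t) = U s ∘L U t
  cont : ∀ x : X, Continuous fun t : ℝ => U t x

/-- The chain relation `A (xs n) = xs (n+1)` for the generator `A` of the group `U`,
expressed via `d/ds U(s) xs n = U(s) (xs (n+1))`. -/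
def GenChain (U : ℝ → X →L[ℝ] X) (xs : ℕ → X) : Prop :=
  ∀ (n : ℕ) (s : ℝ), HasDerivAt (fun t : ℝ => U t (xs n)) (U s (xs (n + 1))) s

/-- `y` is an entire vector of exponential type ≤ r for the generator of `U`:
`σ(y,A) = limsup ‖Aⁿy‖^{1/n} ≤ r`. -/
def ExpTypeLe (U : ℝ → X →L[ℝ] X) (y : X) (r : ℝ) : Prop :=
  ∃ xs : ℕ → X, xs 0 = y ∧ GenChain U xs ∧
    ∀ ρ : ℝ, r < ρ → ∃ c : ℝ, 0 < c ∧ ∀ n : ℕ, ‖xs n‖ ≤ c * ρ ^ n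

/-- `E_r(x,A)`: the best approximation of `x` by exponential type entire vectors
of type at most `r`. -/
noncomputable def bestApprox (U : ℝ → X →L[ℝ] X) (x : X) (r : ℝ) : ℝ :=
  sInf {d : ℝ | ∃ y : X, ExpTypeLe U y r ∧ d = ‖x - y‖}

/-!
By the fundamental theorem of calculus, `(U(τ) - I) U(a) y = ∫_a^{a+τ} U(u) A y du` for
`y ∈ D(A)`. Peeling off one factor `U(τ) - I` this way for each of the `m` derivatives of `x`
costs a factor `|τ|` and shifts the group parameter by at most `|τ|`, so after `m` steps
`‖(U(τ) - I)^{k+m} x‖ ≤ |τ|^m M_U(m|τ|) ‖(U(τ) - I)^k A^m x‖`; take `|τ| ≤ 1/r`.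
-/

namespace IsC0Group

variable {U : ℝ → X →L[ℝ] X}

omit [CompleteSpace X] in
lemma commute (hU : IsC0Group U) (a b : ℝ) : Commute (U a) (U b) := by
  change U a ∘L U b = U b ∘L U a
  rw [← hU.map_add, ← hU.map_add, add_comm]

omit [CompleteSpace X] in
lemma sub_one_pow_apply_comm (hU : IsC0Group U) (τ a : ℝ) (p : ℕ) (y : X) :
    ((U τ - 1) ^ p) (U a y) = U a (((U τ - 1) ^ p) y) :=
  congrArg (fun f : X →L[ℝ] X => f y)
    ((((hU.commute a τ).sub_right (Commute.one_right _)).pow_right p).eq.symm)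

lemma bddAbove_norm (hU : IsC0Group U) (t : ℝ) :
    BddAbove {a : ℝ | ∃ τ : ℝ, |τ| ≤ t ∧ a = ‖U τ‖} := by
  obtain ⟨C, hC⟩ : ∃ C, ∀ τ : {τ : ℝ // |τ| ≤ t}, ‖U τ‖ ≤ C := by
    refine banach_steinhaus fun y => ?_
    obtain ⟨c, hc⟩ := (isCompact_Icc (a := -t) (b := t)).exists_bound_of_continuousOn
      (hU.cont y).continuousOn
    exact ⟨c, fun τ => hc τ (abs_le.mp τ.2)⟩
  exact ⟨C, by rintro _ ⟨τ, hτ, rfl⟩; exact hC ⟨τ, hτ⟩⟩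

lemma norm_le_groupBound (hU : IsC0Group U) {τ t : ℝ} (hτ : |τ| ≤ t) :
    ‖U τ‖ ≤ groupBound U t :=
  le_csSup (hU.bddAbove_norm t) ⟨τ, hτ, rfl⟩

lemma norm_sub_one_pow_apply_le (hU : IsC0Group U) {τ t : ℝ} (hτ : |τ| ≤ t) (k : ℕ) (y : X) :
    ‖((U τ - 1) ^ k) y‖ ≤ (groupBound U t + 1) ^ k * ‖y‖ := by
  induction k with
  | zero => simp
  | succ k ih =>
    have hsub : ‖U τ - 1‖ ≤ groupBound U t + 1 :=
      (norm_sub_le _ _).trans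
        (add_le_add (hU.norm_le_groupBound hτ) ContinuousLinearMap.norm_id_le)
    calc ‖((U τ - 1) ^ (k + 1)) y‖ = ‖(U τ - 1) (((U τ - 1) ^ k) y)‖ := by
          rw [pow_succ', mul_apply_eq_comp]
      _ ≤ ‖U τ - 1‖ * ‖((U τ - 1) ^ k) y‖ := ContinuousLinearMap.le_opNorm _ _
      _ ≤ (groupBound U t + 1) * ((groupBound U t + 1) ^ k * ‖y‖) :=
          mul_le_mul hsub ih (norm_nonneg _) ((norm_nonneg _).trans hsub)
      _ = (groupBound U t + 1) ^ (k + 1) * ‖y‖ := by ring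

lemma norm_sub_one_pow_apply_le_symModulus (hU : IsC0Group U) {τ t : ℝ} (hτ : |τ| ≤ t)
    (k : ℕ) (y : X) : ‖((U τ - 1) ^ k) y‖ ≤ symModulus U k t y := by
  refine le_csSup ⟨(groupBound U t + 1) ^ k * ‖y‖, ?_⟩ ⟨τ, hτ, rfl⟩
  rintro _ ⟨σ, hσ, rfl⟩
  exact hU.norm_sub_one_pow_apply_le hσ k y

lemma sub_one_apply_eq_integral (hU : IsC0Group U) {y z : X}
    (hyz : ∀ s : ℝ, HasDerivAt (fun t : ℝ => U t y) (U s z) s) (τ a : ℝ) :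
    (U τ - 1) (U a y) = ∫ u in a..(a + τ), U u z := by
  rw [intervalIntegral.integral_eq_sub_of_hasDerivAt (fun u _ => hyz u)
    ((hU.cont z).intervalIntegrable _ _), add_comm, hU.map_add]
  rfl

/-- `ys` is a chain `y₀, A y₀, …, Aʲ y₀`, and the group parameter stays in `[-T, T]`. -/
lemma norm_sub_one_pow_add_apply_le (hU : IsC0Group U) (k : ℕ) {j : ℕ} {ys : ℕ → X}
    (hys : ∀ n < j, ∀ s : ℝ, HasDerivAt (fun t : ℝ => U t (ys n)) (U s (ys (n + 1))) s)
    {τ a T : ℝ} (h : |a| + j * |τ| ≤ T) :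
    ‖((U τ - 1) ^ (k + j)) (U a (ys 0))‖
      ≤ |τ| ^ j * (groupBound U T * ‖((U τ - 1) ^ k) (ys j)‖) := by
  induction j generalizing ys a with
  | zero =>
    simp only [Nat.cast_zero, zero_mul, add_zero, pow_zero, one_mul] at h ⊢
    rw [hU.sub_one_pow_apply_comm]
    exact (ContinuousLinearMap.le_opNorm _ _).trans
      (mul_le_mul_of_nonneg_right (hU.norm_le_groupBound h) (norm_nonneg _))
  | succ j ih =>
    have hshift : ∀ n < j, ∀ s : ℝ,
        HasDerivAt (fun t : ℝ => U t (ys (n + 1))) (U s (ys (n + 1 + 1))) s :=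
      fun n hn => hys (n + 1) (by omega)
    have hbound : ∀ u ∈ Set.uIoc a (a + τ), ‖((U τ - 1) ^ (k + j)) (U u (ys 1))‖
        ≤ |τ| ^ j * (groupBound U T * ‖((U τ - 1) ^ k) (ys (j + 1))‖) := by
      intro u hu
      have hua : |u - a| ≤ |τ| := by
        simpa using Set.abs_sub_left_of_mem_uIcc (Set.uIoc_subset_uIcc hu)
      refine ih (ys := fun n => ys (n + 1)) hshift ?_
      have := abs_sub_abs_le_abs_sub u a
      push_cast at h
      linarith
    have hint : IntervalIntegrable (fun u : ℝ => U u (ys 1)) volume a (a + τ) :=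
      (hU.cont _).intervalIntegrable _ _
    calc ‖((U τ - 1) ^ (k + (j + 1))) (U a (ys 0))‖
        = ‖∫ u in a..(a + τ), ((U τ - 1) ^ (k + j)) (U u (ys 1))‖ := by
          rw [← add_assoc, pow_succ, mul_apply_eq_comp,
            hU.sub_one_apply_eq_integral (hys 0 (by omega)),
            ContinuousLinearMap.intervalIntegral_comp_comm _ hint]
      _ ≤ |τ| ^ j * (groupBound U T * ‖((U τ - 1) ^ k) (ys (j + 1))‖) * |a + τ - a| :=
          intervalIntegral.norm_integral_le_of_norm_le_const hbound
      _ = |τ| ^ (j + 1) * (groupBound U T * ‖((U τ - 1) ^ k) (ys (j + 1))‖) := by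
          rw [add_sub_cancel_left, pow_succ]
          ring

end IsC0Group

omit [CompleteSpace X] in
lemma groupBound_nonneg (U : ℝ → X →L[ℝ] X) (t : ℝ) : 0 ≤ groupBound U t :=
  Real.sSup_nonneg (by rintro _ ⟨τ, -, rfl⟩; exact norm_nonneg _)

/-- `x ∈ D(A^m)` is witnessed by the chain `xs` with `xs 0 = x` and `A (xs n) = xs (n + 1)` for
`n < m`, so that `A^m x = xs m`. -/
theorem stmt_15_general {X : Type*} [NormedAddCommGroup X] [NormedSpace ℝ X] [CompleteSpace X]
    (U : ℝ → X →L[ℝ] X) (hU : IsC0Group U)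
    (m : ℕ) (x : X) (xs : ℕ → X) (hx0 : xs 0 = x)
    (hchain : ∀ n < m, ∀ s : ℝ, HasDerivAt (fun t : ℝ => U t (xs n)) (U s (xs (n + 1))) s)
    (k : ℕ) (r : ℝ) (hr : 1 ≤ r) :
    symModulus U (k + m) (1 / r) x
      ≤ (groupBound U ((m : ℝ) / r) / r ^ m) * symModulus U k (1 / r) (xs m) := by
  have hr0 : 0 ≤ 1 / r := one_div_nonneg.mpr (zero_le_one.trans hr)
  refine csSup_le ⟨_, 0, by simpa using hr0, rfl⟩ ?_
  rintro _ ⟨τ, hτ, rfl⟩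
  have hstep := hU.norm_sub_one_pow_add_apply_le k hchain (τ := τ) (a := 0) (T := m / r) (by
    rw [abs_zero, zero_add, div_eq_mul_one_div]
    exact mul_le_mul_of_nonneg_left hτ m.cast_nonneg)
  rw [hU.map_zero, hx0, one_apply_eq_self] at hstep
  calc ‖((U τ - 1) ^ (k + m)) x‖
      ≤ |τ| ^ m * (groupBound U (m / r) * ‖((U τ - 1) ^ k) (xs m)‖) := hstep
    _ ≤ (1 / r) ^ m * (groupBound U (m / r) * symModulus U k (1 / r) (xs m)) := by
        have := groupBound_nonneg U (m / r)
        gcongr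
        exact hU.norm_sub_one_pow_apply_le_symModulus hτ k (xs m)
    _ = groupBound U (m / r) / r ^ m * symModulus U k (1 / r) (xs m) := by
        rw [one_div, inv_pow]
        ring

/-- If x ∈ D(A^m) (witnessed by the chain xs with xs 0 = x and A xs_n = xs_{n+1}
for n < m, so that A^m x = xs m), then for every k ≥ 1 and r ≥ 1:
ω̃_{k+m}(1/r, x) ≤ (M_U(m/r)/r^m)·ω̃_k(1/r, A^m x). -/
theorem stmt_15 {X : Type*} [NormedAddCommGroup X] [NormedSpace ℝ X] [CompleteSpace X]
    (U : ℝ → X →L[ℝ] X) (hU : IsC0Group U)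
    (m : ℕ) (hm : 1 ≤ m) (x : X) (xs : ℕ → X) (hx0 : xs 0 = x)
    (hchain : ∀ n < m, ∀ s : ℝ, HasDerivAt (fun t : ℝ => U t (xs n)) (U s (xs (n + 1))) s)
    (k : ℕ) (hk : 1 ≤ k) (r : ℝ) (hr : 1 ≤ r) :
    symModulus U (k + m) (1 / r) x
      ≤ (groupBound U ((m : ℝ) / r) / r ^ m) * symModulus U k (1 / r) (xs m) :=
  stmt_15_general U hU m x xs hx0 hchain k r hr
end
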